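/- arXiv:2001.09706 — 2 statements merged into one kernel-verified Lean document; each statement's English description precedes it below -/
import Mathlib

section
/- For a bounded linear operator T on a complex Hilbert space, w(T)^2 ≤ w(T^2) + ‖Im(T)‖^2, where Im(T) = (T - T*)/(2i). -/
open ContinuousLinearMap

/-- Numerical radius of a bounded operator on a complex Hilbert space. -/
noncomputable def numRadius {H : Type*} [NormedAddCommGroup H] [InnerProductSpace ℂ H]
    (T : H →L[ℂ] H) : ℝ :=
  sSup {y : ℝ | ∃ x : H, ‖x‖ = 1 ∧ y = ‖(inner ℂ (T x) x : ℂ)‖}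

set_option linter.unusedSectionVars false

section aux

variable {H : Type*} [NormedAddCommGroup H] [InnerProductSpace ℂ H] [CompleteSpace H]

local notation "⟪" a ", " b "⟫" => (inner ℂ a b : ℂ)

lemma numRadius_bddAbove (T : H →L[ℂ] H) :
    BddAbove {y : ℝ | ∃ x : H, ‖x‖ = 1 ∧ y = ‖(inner ℂ (T x) x : ℂ)‖} := by
  refine ⟨‖T‖, ?_⟩
  rintro y ⟨x, hx, rfl⟩
  calc ‖⟪T x, x⟫‖ ≤ ‖T x‖ * ‖x‖ := by
        simpa using norm_inner_le_norm (𝕜 := ℂ) (T x) x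
    _ ≤ (‖T‖ * ‖x‖) * ‖x‖ := by gcongr; exact T.le_opNorm x
    _ = ‖T‖ := by rw [hx]; ring

lemma abs_inner_le_numRadius (T : H →L[ℂ] H) {x : H} (hx : ‖x‖ = 1) :
    ‖⟪T x, x⟫‖ ≤ numRadius T :=
  le_csSup (numRadius_bddAbove T) ⟨x, hx, rfl⟩

lemma numRadius_nonneg (T : H →L[ℂ] H) : 0 ≤ numRadius T := by
  apply Real.sSup_nonneg
  rintro y ⟨x, hx, rfl⟩
  exact norm_nonneg _

/-- The pointwise core inequality. -/
lemma key (T : H →L[ℂ] H) {x : H} (hx : ‖x‖ = 1) :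
    ‖⟪T x, x⟫‖ ^ 2 ≤
      ‖⟪(T ^ 2) x, x⟫‖ +
        ‖(((2 * Complex.I)⁻¹ : ℂ) • (T - adjoint T)) x‖ ^ 2 := by
  have hxx : ⟪x, x⟫ = 1 := by
    rw [inner_self_eq_norm_sq_to_K (𝕜 := ℂ)]; rw [hx]; norm_num
  set z : ℂ := ⟪T x, x⟫ with hz
  set y : H := T x - (starRingEnd ℂ z) • x with hy
  set y' : H := adjoint T x - z • x with hy'
  have hTx : T x = (starRingEnd ℂ z) • x + y := by rw [hy]; abel
  have hT'x : adjoint T x = z • x + y' := by rw [hy']; abel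
  have hyx : ⟪y, x⟫ = 0 := by
    rw [hy, inner_sub_left, inner_smul_left, hxx]
    simp [hz]
  have hxy : ⟪x, y⟫ = 0 := by rw [← inner_conj_symm, hyx]; simp
  have hxy' : ⟪x, y'⟫ = 0 := by
    rw [hy', inner_sub_right, adjoint_inner_right, inner_smul_right, hxx]
    simp [hz]
  set w : ℂ := ⟪y, y'⟫ with hw
  -- (1) ⟪T²x, x⟫ = z² + w
  have h1 : ⟪(T ^ 2) x, x⟫ = z ^ 2 + w := by
    have hp : (T ^ 2) x = T (T x) := by simp [pow_two, mul_apply]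
    rw [hp, ← adjoint_inner_right, hTx, hT'x]
    rw [inner_add_left, inner_add_right, inner_add_right, inner_smul_left,
      inner_smul_right, inner_smul_right, inner_smul_left, hxx, hxy', hyx, hw]
    simp; ring
  -- (2) the decomposition of (Im T) x
  have hb : ((2 * Complex.I)⁻¹ : ℂ) • (T x - adjoint T x)
      = (-(z.im) : ℂ) • x + ((2 * Complex.I)⁻¹ : ℂ) • (y - y') := by
    rw [hTx, hT'x]
    have h := Complex.sub_conj z
    push_cast at h
    match_scalars
    · field_simp
      linear_combination -h
    · ring
    · ring
  have hBx : (((2 * Complex.I)⁻¹ : ℂ) • (T - adjoint T)) x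
      = (-(z.im) : ℂ) • x + ((2 * Complex.I)⁻¹ : ℂ) • (y - y') := by
    rw [smul_apply, sub_apply, hb]
  -- (3) norm of (Im T) x
  have h2 : ‖(((2 * Complex.I)⁻¹ : ℂ) • (T - adjoint T)) x‖ ^ 2
      = z.im ^ 2 + ‖y - y'‖ ^ 2 / 4 := by
    rw [hBx, norm_add_sq (𝕜 := ℂ)]
    have horth : (inner ℂ ((-(z.im) : ℂ) • x) (((2 * Complex.I)⁻¹ : ℂ) • (y - y')) : ℂ) = 0 := by
      rw [inner_smul_left, inner_smul_right, inner_sub_right, hxy, hxy']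
      simp
    rw [horth]
    have hn1 : ‖(-(z.im) : ℂ) • x‖ = |z.im| := by
      rw [norm_smul, hx]
      simp
    have hn2 : ‖((2 * Complex.I)⁻¹ : ℂ) • (y - y')‖ = ‖y - y'‖ / 2 := by
      rw [norm_smul]
      simp [norm_inv]
      ring
    rw [hn1, hn2]
    rw [sq_abs]
    simp
    ring
  rw [h1, h2]
  -- real-number endgame
  set a : ℝ := ‖z‖ with ha
  set W : ℝ := ‖w‖ with hW
  have f1 : a ^ 2 = (z ^ 2).re + 2 * z.im ^ 2 := by
    rw [ha, Complex.sq_norm, Complex.normSq_apply]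
    simp [pow_two, Complex.mul_re]
    ring
  have f2 : (z ^ 2).re + w.re ≤ ‖z ^ 2 + w‖ := by
    have := Complex.re_le_norm (z ^ 2 + w)
    simpa [Complex.add_re] using this
  have f3 : a ^ 2 - W ≤ ‖z ^ 2 + w‖ := by
    have h4 : ‖z ^ 2‖ ≤ ‖z ^ 2 + w‖ + ‖w‖ := by
      calc ‖z ^ 2‖ = ‖(z ^ 2 + w) + (-w)‖ := by ring_nf
        _ ≤ ‖z ^ 2 + w‖ + ‖-w‖ := norm_add_le _ _
        _ = ‖z ^ 2 + w‖ + ‖w‖ := by rw [norm_neg]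
    have h5 : ‖z ^ 2‖ = a ^ 2 := by rw [ha, norm_pow]
    linarith
  have f4 : W ≤ ‖y‖ * ‖y'‖ := by
    rw [hW, hw]
    exact norm_inner_le_norm y y'
  have f5 : ‖y - y'‖ ^ 2 = ‖y‖ ^ 2 - 2 * w.re + ‖y'‖ ^ 2 := by
    rw [norm_sub_sq (𝕜 := ℂ), RCLike.re_to_complex, ← hw]
  have f6 : 2 * (‖y‖ * ‖y'‖) ≤ ‖y‖ ^ 2 + ‖y'‖ ^ 2 := by nlinarith [sq_nonneg (‖y‖ - ‖y'‖)]
  linarith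

end aux

theorem numRadius_sq_le_numRadius_sq_add_norm_im_sq
    {H : Type*} [NormedAddCommGroup H] [InnerProductSpace ℂ H] [CompleteSpace H]
    (T : H →L[ℂ] H) :
    (numRadius T) ^ 2 ≤ numRadius (T ^ 2) + ‖((2 * Complex.I)⁻¹ : ℂ) • (T - adjoint T)‖ ^ 2 := by
  set B : H →L[ℂ] H := ((2 * Complex.I)⁻¹ : ℂ) • (T - adjoint T) with hB
  set C : ℝ := numRadius (T ^ 2) + ‖B‖ ^ 2 with hC
  have hC0 : 0 ≤ C := by
    have := numRadius_nonneg (T ^ 2)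
    positivity
  have hsup : numRadius T ≤ Real.sqrt C := by
    apply Real.sSup_le
    · rintro r ⟨x, hx, rfl⟩
      have hr2 : ‖(inner ℂ (T x) x : ℂ)‖ ^ 2 ≤ C := by
        have h1 := key T hx
        have h2 := abs_inner_le_numRadius (T ^ 2) hx
        have h3 : ‖B x‖ ^ 2 ≤ ‖B‖ ^ 2 := by
          have := B.le_opNorm x
          rw [hx, mul_one] at this
          exact pow_le_pow_left₀ (norm_nonneg _) this 2
        rw [hC]
        linarith
      calc ‖(inner ℂ (T x) x : ℂ)‖
          = Real.sqrt (‖(inner ℂ (T x) x : ℂ)‖ ^ 2) := by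
            rw [Real.sqrt_sq (norm_nonneg _)]
        _ ≤ Real.sqrt C := Real.sqrt_le_sqrt hr2
    · exact Real.sqrt_nonneg C
  have : (numRadius T) ^ 2 ≤ Real.sqrt C ^ 2 :=
    pow_le_pow_left₀ (numRadius_nonneg T) hsup 2
  rw [Real.sq_sqrt hC0] at this
  exact this
end

section
/- For any bounded linear operator T on a complex Hilbert space, m(Re(T)) ≤ √(w(T^2)) and m(Im(T)) ≤ √(w(T^2)), where m is the Crawford number and w the numerical radius. -/
open ContinuousLinearMap

/-- Crawford number of a bounded operator on a complex Hilbert space. -/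
noncomputable def crawford {H : Type*} [NormedAddCommGroup H] [InnerProductSpace ℂ H]
    (T : H →L[ℂ] H) : ℝ :=
  sInf {y : ℝ | ∃ x : H, ‖x‖ = 1 ∧ y = ‖(inner ℂ (T x) x : ℂ)‖}

section Aux

variable {H : Type*} [NormedAddCommGroup H] [InnerProductSpace ℂ H]

lemma crawford_le_aux (T : H →L[ℂ] H) {x : H} (hx : ‖x‖ = 1) :
    crawford T ≤ ‖(inner ℂ (T x) x : ℂ)‖ := by
  exact csInf_le ⟨0, by rintro y ⟨x, hx, rfl⟩; exact norm_nonneg _⟩ ⟨x, hx, rfl⟩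

lemma le_numRadius_aux (T : H →L[ℂ] H) {x : H} (hx : ‖x‖ = 1) :
    ‖(inner ℂ (T x) x : ℂ)‖ ≤ numRadius T := by
  refine le_csSup ⟨‖T‖, ?_⟩ ⟨x, hx, rfl⟩
  rintro y ⟨x, hx, rfl⟩
  calc ‖(inner ℂ (T x) x : ℂ)‖ ≤ ‖T x‖ * ‖x‖ := norm_inner_le_norm _ _
    _ ≤ ‖T‖ * ‖x‖ * ‖x‖ := mul_le_mul_of_nonneg_right (T.le_opNorm x) (norm_nonneg x)
    _ = ‖T‖ := by rw [hx]; ring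

/-- Every boundary point of the spectrum is an approximate eigenvalue. -/
lemma exists_approx_eig [CompleteSpace H] [Nontrivial H] (T : H →L[ℂ] H) :
    ∃ l : ℂ, ∀ ε > 0, ∃ x : H, ‖x‖ = 1 ∧ ‖T x - l • x‖ < ε := by
  have hσne : (spectrum ℂ T).Nonempty := spectrum.nonempty T
  have hσcl : IsClosed (spectrum ℂ T) := spectrum.isClosed T
  have hσne' : spectrum ℂ T ≠ Set.univ := by
    intro h
    have h1 : ((‖T‖ + 1 : ℝ) : ℂ) ∈ Metric.closedBall (0:ℂ) ‖T‖ :=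
      spectrum.subset_closedBall_norm T (by rw [h]; trivial)
    simp only [Metric.mem_closedBall, dist_zero_right, Complex.norm_real, Real.norm_eq_abs] at h1
    have : (0:ℝ) ≤ ‖T‖ := norm_nonneg _
    rw [abs_of_nonneg (by linarith)] at h1
    linarith
  have hfr : (frontier (spectrum ℂ T)).Nonempty := by
    by_contra h
    rw [Set.not_nonempty_iff_eq_empty, ← isClopen_iff_frontier_eq_empty, isClopen_iff] at h
    rcases h with h | h
    · exact hσne.ne_empty h
    · exact hσne' h
  obtain ⟨l, hl⟩ := hfr
  have hlσ : l ∈ spectrum ℂ T := hσcl.closure_eq ▸ (frontier_subset_closure hl)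
  refine ⟨l, fun ε hε => ?_⟩
  have hlc : l ∈ closure (spectrum ℂ T)ᶜ := by
    rw [frontier_eq_closure_inter_closure] at hl; exact hl.2
  obtain ⟨μ, hμc, hμd⟩ := Metric.mem_closure_iff.mp hlc (ε/4) (by linarith)
  rw [Set.mem_compl_iff, spectrum.notMem_iff] at hμc
  set d : ℝ := dist l μ with hd
  have hd0 : 0 < d := by
    rw [hd, dist_pos]; rintro rfl
    rw [spectrum.mem_iff] at hlσ; exact hlσ hμc
  set u := hμc.unit with hu
  set R : H →L[ℂ] H := ((u⁻¹ : (H →L[ℂ] H)ˣ) : H →L[ℂ] H) with hR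
  have hRpos : 0 < ‖R‖ := Units.norm_pos u⁻¹
  have hinv : ‖R‖⁻¹ ≤ d := by
    by_contra hcon
    push_neg at hcon
    have key : ‖(algebraMap ℂ (H →L[ℂ] H) l - T) - u‖ < ‖R‖⁻¹ := by
      have h2 : ((algebraMap ℂ (H →L[ℂ] H) l - T) - u) = algebraMap ℂ (H →L[ℂ] H) (l - μ) := by
        rw [hu, IsUnit.unit_spec, map_sub]; abel
      rw [h2, norm_algebraMap' _ (l - μ)]
      rwa [hd, dist_eq_norm] at hcon
    have hunit : IsUnit (algebraMap ℂ (H →L[ℂ] H) l - T) :=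
      ⟨Units.ofNearby u _ key, rfl⟩
    rw [spectrum.mem_iff] at hlσ; exact hlσ hunit
  have hRge : d⁻¹ ≤ ‖R‖ := by
    rw [← inv_inv ‖R‖]; exact inv_anti₀ (by positivity) hinv
  obtain ⟨y, hy1, hy2⟩ := ContinuousLinearMap.exists_lt_apply_of_lt_opNorm
    R (r := (2*d)⁻¹)
    (lt_of_lt_of_le (by rw [mul_comm]; exact inv_strictAnti₀ hd0 (by linarith)) hRge)
  set z := R y with hz
  have hzpos : 0 < ‖z‖ := lt_trans (by positivity) hy2
  set c : ℂ := ((‖z‖ : ℂ))⁻¹ with hc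
  have hcn : ‖c‖ = ‖z‖⁻¹ := by
    rw [hc, norm_inv, Complex.norm_real, Real.norm_eq_abs, abs_of_nonneg (norm_nonneg z)]
  set x := c • z with hx
  have hxn : ‖x‖ = 1 := by
    rw [hx, norm_smul, hcn, inv_mul_cancel₀ (ne_of_gt hzpos)]
  refine ⟨x, hxn, ?_⟩
  have happ : (algebraMap ℂ (H →L[ℂ] H) μ - T) z = y := by
    have h3 : ((algebraMap ℂ (H →L[ℂ] H) μ - T) * R) y = (1 : H →L[ℂ] H) y := by
      rw [show (algebraMap ℂ (H →L[ℂ] H) μ - T) = (u : H →L[ℂ] H) from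
        (IsUnit.unit_spec hμc).symm, u.mul_inv]
    simpa [ContinuousLinearMap.mul_apply] using h3
  have hTμ : μ • x - T x = c • y := by
    have h4 : (algebraMap ℂ (H →L[ℂ] H) μ - T) x = c • y := by
      rw [hx, map_smul, happ]
    simpa [ContinuousLinearMap.sub_apply, ContinuousLinearMap.algebraMap_apply,
      ContinuousLinearMap.smul_apply, ContinuousLinearMap.one_apply,
      Algebra.algebraMap_eq_smul_one] using h4
  have e1 : ‖T x - μ • x‖ < 2*d := by
    rw [← norm_neg, neg_sub, hTμ, norm_smul, hcn]
    calc ‖z‖⁻¹ * ‖y‖ ≤ ‖z‖⁻¹ * 1 := mul_le_mul_of_nonneg_left (le_of_lt hy1) (by positivity)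
      _ = ‖z‖⁻¹ := mul_one _
      _ < 2*d := by rw [← inv_inv (2*d)]; exact inv_strictAnti₀ (by positivity) hy2
  have e2 : ‖μ • x - l • x‖ ≤ d := by
    rw [← sub_smul, norm_smul, hxn, mul_one, hd, dist_eq_norm, ← norm_neg (l - μ)]
    simp
  calc ‖T x - l • x‖ ≤ ‖T x - μ • x‖ + ‖μ • x - l • x‖ := by
        have := norm_add_le (T x - μ • x) (μ • x - l • x); simpa using this
    _ < ε := by have : d < ε/4 := hμd; linarith

lemma inner_re_part [CompleteSpace H] (T : H →L[ℂ] H) (x : H) :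
    (inner ℂ (((1 / 2 : ℂ) • (T + adjoint T)) x) x : ℂ)
      = (((inner ℂ (T x) x : ℂ).re : ℝ) : ℂ) := by
  set z : ℂ := inner ℂ (T x) x with hz
  calc (inner ℂ (((1 / 2 : ℂ) • (T + adjoint T)) x) x : ℂ)
      = (starRingEnd ℂ) (1/2) * (inner ℂ ((T + adjoint T) x) x : ℂ) := by
        rw [ContinuousLinearMap.smul_apply, inner_smul_left]
    _ = (1/2 : ℂ) * (z + (starRingEnd ℂ) z) := by
        rw [ContinuousLinearMap.add_apply, inner_add_left, adjoint_inner_left,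
          ← inner_conj_symm x (T x), ← hz,
          show (starRingEnd ℂ) (1/2 : ℂ) = 1/2 by simp [map_ofNat]]
    _ = ((z.re : ℝ) : ℂ) := by
        rw [Complex.add_conj]
        push_cast
        ring

lemma inner_im_part [CompleteSpace H] (T : H →L[ℂ] H) (x : H) :
    (inner ℂ ((((2 * Complex.I)⁻¹ : ℂ) • (T - adjoint T)) x) x : ℂ)
      = ((-(inner ℂ (T x) x : ℂ).im : ℝ) : ℂ) := by
  set z : ℂ := inner ℂ (T x) x with hz
  have hconj : (starRingEnd ℂ) ((2 * Complex.I)⁻¹ : ℂ) = Complex.I / 2 := by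
    have h8 : (-(2*Complex.I)) * (Complex.I/2) = 1 := by
      linear_combination -Complex.I_mul_I
    rw [map_inv₀, map_mul, Complex.conj_I, map_ofNat,
      show (2:ℂ) * -Complex.I = -(2*Complex.I) by ring]
    exact inv_eq_of_mul_eq_one_right h8
  calc (inner ℂ ((((2 * Complex.I)⁻¹ : ℂ) • (T - adjoint T)) x) x : ℂ)
      = (starRingEnd ℂ) ((2 * Complex.I)⁻¹ : ℂ) * (inner ℂ ((T - adjoint T) x) x : ℂ) := by
        rw [ContinuousLinearMap.smul_apply, inner_smul_left]
    _ = (Complex.I / 2) * (z - (starRingEnd ℂ) z) := by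
        rw [hconj, ContinuousLinearMap.sub_apply, inner_sub_left, adjoint_inner_left,
          ← inner_conj_symm x (T x), ← hz]
    _ = ((-z.im : ℝ) : ℂ) := by
        rw [Complex.sub_conj]
        push_cast
        linear_combination (z.im : ℂ) * Complex.I_mul_I

end Aux

theorem crawford_re_le_sqrt_numRadius_sq_and_crawford_im_le_sqrt_numRadius_sq
    {H : Type*} [NormedAddCommGroup H] [InnerProductSpace ℂ H] [CompleteSpace H]
    (T : H →L[ℂ] H) :
    crawford ((1 / 2 : ℂ) • (T + adjoint T)) ≤ Real.sqrt (numRadius (T ^ 2)) ∧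
      crawford (((2 * Complex.I)⁻¹ : ℂ) • (T - adjoint T)) ≤ Real.sqrt (numRadius (T ^ 2)) := by
  rcases subsingleton_or_nontrivial H with hH | hH
  · -- trivial space: all the sets are empty
    have hempty : ∀ S : H →L[ℂ] H,
        {y : ℝ | ∃ x : H, ‖x‖ = 1 ∧ y = ‖(inner ℂ (S x) x : ℂ)‖} = ∅ := by
      intro S
      ext y
      simp only [Set.mem_setOf_eq, Set.mem_empty_iff_false, iff_false]
      rintro ⟨x, hx, -⟩
      rw [Subsingleton.elim x 0, norm_zero] at hx
      norm_num at hx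
    constructor <;>
    · rw [crawford, hempty, Real.sInf_empty]
      positivity
  · obtain ⟨l, hl⟩ := exists_approx_eig T
    -- |l|^2 ≤ numRadius (T^2)
    have hw : ‖l‖^2 ≤ numRadius (T ^ 2) := by
      have key : ∀ ε > (0:ℝ), ‖l‖^2 ≤ numRadius (T ^ 2) + (‖T‖ + ‖l‖ + 1) * ε := by
        intro ε hε
        obtain ⟨x, hx, hxε⟩ := hl ε hε
        have h2 : ‖(T ^ 2) x - (l^2) • x‖ ≤ (‖T‖ + ‖l‖) * ε := by
          have hfact : (T ^ 2) x - (l^2) • x = T (T x - l • x) + l • (T x - l • x) := by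
            rw [pow_two, ContinuousLinearMap.mul_apply]
            rw [map_sub, map_smul, smul_sub, smul_smul, pow_two]
            abel
          rw [hfact]
          calc ‖T (T x - l • x) + l • (T x - l • x)‖
              ≤ ‖T (T x - l • x)‖ + ‖l • (T x - l • x)‖ := norm_add_le _ _
            _ ≤ ‖T‖ * ‖T x - l • x‖ + ‖l‖ * ‖T x - l • x‖ := by
                gcongr
                · exact T.le_opNorm _
                · rw [norm_smul]
            _ ≤ ‖T‖ * ε + ‖l‖ * ε := by
                have := le_of_lt hxε
                gcongr
            _ = (‖T‖ + ‖l‖) * ε := by ring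
        have h3 : ‖(inner ℂ ((T ^ 2) x) x : ℂ) - (starRingEnd ℂ) (l^2)‖ ≤ (‖T‖ + ‖l‖) * ε := by
          have : (inner ℂ ((T ^ 2) x) x : ℂ) - (starRingEnd ℂ) (l^2)
              = inner ℂ ((T ^ 2) x - (l^2) • x) x := by
            rw [inner_sub_left, inner_smul_left]
            have : (inner ℂ x x : ℂ) = 1 := by
              rw [inner_self_eq_norm_sq_to_K, hx]; norm_num
            rw [this, mul_one]
          rw [this]
          calc ‖(inner ℂ ((T ^ 2) x - (l^2) • x) x : ℂ)‖
              ≤ ‖(T ^ 2) x - (l^2) • x‖ * ‖x‖ := norm_inner_le_norm _ _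
            _ ≤ (‖T‖ + ‖l‖) * ε := by rw [hx, mul_one]; exact h2
        have h4 : ‖l‖^2 ≤ ‖(inner ℂ ((T ^ 2) x) x : ℂ)‖ + (‖T‖ + ‖l‖) * ε := by
          have h6 : ‖(starRingEnd ℂ) (l^2)‖ ≤ ‖(inner ℂ ((T ^ 2) x) x : ℂ)‖ + (‖T‖ + ‖l‖) * ε := by
            have h7 : (starRingEnd ℂ) (l^2) = (inner ℂ ((T ^ 2) x) x : ℂ)
                - ((inner ℂ ((T ^ 2) x) x : ℂ) - (starRingEnd ℂ) (l^2)) := by ring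
            calc ‖(starRingEnd ℂ) (l^2)‖
                = ‖(inner ℂ ((T ^ 2) x) x : ℂ)
                  - ((inner ℂ ((T ^ 2) x) x : ℂ) - (starRingEnd ℂ) (l^2))‖ := by rw [← h7]
              _ ≤ ‖(inner ℂ ((T ^ 2) x) x : ℂ)‖
                  + ‖(inner ℂ ((T ^ 2) x) x : ℂ) - (starRingEnd ℂ) (l^2)‖ := norm_sub_le _ _
              _ ≤ ‖(inner ℂ ((T ^ 2) x) x : ℂ)‖ + (‖T‖ + ‖l‖) * ε := by linarith
          rwa [RCLike.norm_conj, norm_pow] at h6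
        calc ‖l‖^2 ≤ ‖(inner ℂ ((T ^ 2) x) x : ℂ)‖ + (‖T‖ + ‖l‖) * ε := h4
          _ ≤ numRadius (T ^ 2) + (‖T‖ + ‖l‖ + 1) * ε := by
              have := le_numRadius_aux (T ^ 2) hx
              nlinarith [norm_nonneg T, norm_nonneg l]
      refine le_of_forall_pos_le_add fun ε hε => ?_
      have hC0 : (0:ℝ) < ‖T‖ + ‖l‖ + 1 := by positivity
      have h := key (ε / (‖T‖ + ‖l‖ + 1)) (by positivity)
      have heq : (‖T‖ + ‖l‖ + 1) * (ε / (‖T‖ + ‖l‖ + 1)) = ε := by field_simp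
      linarith
    have hsqrt : ‖l‖ ≤ Real.sqrt (numRadius (T ^ 2)) := Real.le_sqrt_of_sq_le hw
    -- crawford bounds
    have hcraw : ∀ S : H →L[ℂ] H,
        (∀ ε > (0:ℝ), ∃ x : H, ‖x‖ = 1 ∧ ‖(inner ℂ (S x) x : ℂ)‖ ≤ ‖l‖ + ε) →
        crawford S ≤ ‖l‖ := by
      intro S hS
      refine le_of_forall_pos_le_add fun ε hε => ?_
      obtain ⟨x, hx, hb⟩ := hS ε hε
      exact (crawford_le_aux S hx).trans hb
    have hinner : ∀ ε > (0:ℝ), ∃ x : H, ‖x‖ = 1 ∧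
        ‖(inner ℂ (T x) x : ℂ) - (starRingEnd ℂ) l‖ ≤ ε := by
      intro ε hε
      obtain ⟨x, hx, hxε⟩ := hl ε hε
      refine ⟨x, hx, ?_⟩
      have : (inner ℂ (T x) x : ℂ) - (starRingEnd ℂ) l = inner ℂ (T x - l • x) x := by
        rw [inner_sub_left, inner_smul_left]
        have h1 : (inner ℂ x x : ℂ) = 1 := by
          rw [inner_self_eq_norm_sq_to_K, hx]; norm_num
        rw [h1, mul_one]
      rw [this]
      calc ‖(inner ℂ (T x - l • x) x : ℂ)‖ ≤ ‖T x - l • x‖ * ‖x‖ := norm_inner_le_norm _ _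
        _ ≤ ε := by rw [hx, mul_one]; exact le_of_lt hxε
    refine ⟨(hcraw _ ?_).trans hsqrt, (hcraw _ ?_).trans hsqrt⟩
    · intro ε hε
      obtain ⟨x, hx, hb⟩ := hinner ε hε
      refine ⟨x, hx, ?_⟩
      rw [inner_re_part T x]
      rw [Complex.norm_real, Real.norm_eq_abs]
      have h1 : |(inner ℂ (T x) x : ℂ).re - ((starRingEnd ℂ) l).re| ≤ ε := by
        calc |(inner ℂ (T x) x : ℂ).re - ((starRingEnd ℂ) l).re|
            = |((inner ℂ (T x) x : ℂ) - (starRingEnd ℂ) l).re| := by rw [Complex.sub_re]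
          _ ≤ ‖(inner ℂ (T x) x : ℂ) - (starRingEnd ℂ) l‖ := Complex.abs_re_le_norm _
          _ ≤ ε := hb
      have h2 : |((starRingEnd ℂ) l).re| ≤ ‖l‖ := by
        rw [Complex.conj_re]
        exact Complex.abs_re_le_norm l
      calc |(inner ℂ (T x) x : ℂ).re|
          ≤ |((starRingEnd ℂ) l).re| + |(inner ℂ (T x) x : ℂ).re - ((starRingEnd ℂ) l).re| := by
            linarith [abs_sub_abs_le_abs_sub ((inner ℂ (T x) x : ℂ).re)
              (((starRingEnd ℂ) l).re)]
        _ ≤ ‖l‖ + ε := by linarith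
    · intro ε hε
      obtain ⟨x, hx, hb⟩ := hinner ε hε
      refine ⟨x, hx, ?_⟩
      rw [inner_im_part T x]
      rw [Complex.norm_real, Real.norm_eq_abs, abs_neg]
      have h1 : |(inner ℂ (T x) x : ℂ).im - ((starRingEnd ℂ) l).im| ≤ ε := by
        calc |(inner ℂ (T x) x : ℂ).im - ((starRingEnd ℂ) l).im|
            = |((inner ℂ (T x) x : ℂ) - (starRingEnd ℂ) l).im| := by rw [Complex.sub_im]
          _ ≤ ‖(inner ℂ (T x) x : ℂ) - (starRingEnd ℂ) l‖ := Complex.abs_im_le_norm _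
          _ ≤ ε := hb
      have h2 : |((starRingEnd ℂ) l).im| ≤ ‖l‖ := by
        rw [Complex.conj_im, abs_neg]
        exact Complex.abs_im_le_norm l
      calc |(inner ℂ (T x) x : ℂ).im|
          ≤ |((starRingEnd ℂ) l).im| + |(inner ℂ (T x) x : ℂ).im - ((starRingEnd ℂ) l).im| := by
            linarith [abs_sub_abs_le_abs_sub ((inner ℂ (T x) x : ℂ).im)
              (((starRingEnd ℂ) l).im)]
        _ ≤ ‖l‖ + ε := by linarith
end
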